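/- If φ is an irreducible non-satisfiable 3-CNF formula with m distinct clauses over n variables, then m ≤ (C(n,3) · 2ⁿ) / (2^(n−3) + C(n,3) − 1). -/

import Mathlib

/-- A 3-clause over `n` variables: a set of 3 literals (variable, sign)
with pairwise distinct variables. Sign `true` = positive literal. -/
abbrev Clause (n : ℕ) : Type :=
  {c : Finset (Fin n × Bool) // c.card = 3 ∧ (c.image Prod.fst).card = 3}

/-- Evaluation of a clause at an assignment: true iff some literal is true. -/
def Clause.eval {n : ℕ} (ψ : Clause n) (v : Fin n → Bool) : Bool :=
  decide (∃ l ∈ ψ.1, v l.1 = l.2)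

/-- The set `S(ψ)` of assignments falsifying `ψ`. -/
def falsSet {n : ℕ} (ψ : Clause n) : Finset (Fin n → Bool) :=
  Finset.univ.filter fun v => ψ.eval v = false

/-- A 3-CNF formula (a finite set of clauses) is unsatisfiable. -/
def Unsat {n : ℕ} (φ : Finset (Clause n)) : Prop :=
  ¬ ∃ v : Fin n → Bool, ∀ ψ ∈ φ, ψ.eval v = true

/-!
Each pivot of an irreducible unsatisfiable formula falsifies exactly one of its clauses, and
distinct clauses have distinct pivots. Every other assignment falsifies at most `C(n,3)`
clauses, since a clause falsified by `v` is determined by its three variables. Each clause is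
falsified by `2^(n-3)` assignments, so double counting the falsifying pairs gives
`m 2^(n-3) ≤ m + (2^n - m) C(n,3)`, which rearranges to the bound.
-/

open Finset

lemma card_filter_forall_mem_eq_pow {ι α : Type*} [Fintype ι] [DecidableEq ι] [Fintype α]
    [DecidableEq α] (s : Finset ι) (g : ι → α) :
    #{v : ι → α | ∀ i ∈ s, v i = g i} = Fintype.card α ^ (Fintype.card ι - #s) := by
  have hpi : ({v : ι → α | ∀ i ∈ s, v i = g i} : Finset (ι → α)) =
      Fintype.piFinset fun i => if i ∈ s then {g i} else univ := by
    ext v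
    simp only [mem_filter, mem_univ, true_and, Fintype.mem_piFinset]
    refine forall_congr' fun i => ?_
    split_ifs with hi <;> simp [hi]
  rw [hpi, Fintype.card_piFinset]
  simp [apply_ite Finset.card, prod_ite, filter_not, card_sdiff_of_subset]

namespace Clause

variable {n : ℕ}

def vars (ψ : Clause n) : Finset (Fin n) := ψ.1.image Prod.fst

lemma card_vars (ψ : Clause n) : #ψ.vars = 3 := ψ.2.2

lemma eq_of_mem_of_fst_eq {ψ : Clause n} {l l' : Fin n × Bool} (hl : l ∈ ψ.1) (hl' : l' ∈ ψ.1)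
    (h : l.1 = l'.1) : l = l' := by
  have hinj : Set.InjOn Prod.fst (ψ.1 : Set (Fin n × Bool)) := by
    rw [← card_image_iff, ψ.2.2, ψ.2.1]
  exact hinj hl hl' h

lemma eval_eq_false_iff (ψ : Clause n) (v : Fin n → Bool) :
    ψ.eval v = false ↔ ∀ l ∈ ψ.1, v l.1 = !l.2 := by
  simp only [eval, decide_eq_false_iff_not, not_exists, not_and, Bool.eq_not_iff, ne_eq]

/-- On `ψ.vars` this is the only assignment falsifying `ψ` (it is `false` elsewhere). -/
def falsifier (ψ : Clause n) (i : Fin n) : Bool := decide ((i, false) ∈ ψ.1)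

lemma falsifier_fst {ψ : Clause n} {l : Fin n × Bool} (hl : l ∈ ψ.1) :
    ψ.falsifier l.1 = !l.2 := by
  obtain ⟨i, _ | _⟩ := l
  · simpa [falsifier] using hl
  · have : (i, false) ∉ ψ.1 := fun h => by simpa using eq_of_mem_of_fst_eq hl h rfl
    simpa [falsifier] using this

lemma falsSet_eq (ψ : Clause n) :
    falsSet ψ = ({v | ∀ i ∈ ψ.vars, v i = ψ.falsifier i} : Finset (Fin n → Bool)) := by
  ext v
  simp only [falsSet, mem_filter, mem_univ, true_and, eval_eq_false_iff, vars,
    forall_mem_image]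
  exact forall₂_congr fun l hl => by rw [falsifier_fst hl]

lemma card_falsSet (ψ : Clause n) : #(falsSet ψ) = 2 ^ (n - 3) := by
  have h := card_filter_forall_mem_eq_pow ψ.vars ψ.falsifier
  rw [card_vars, Fintype.card_bool, Fintype.card_fin] at h
  rw [falsSet_eq]
  convert h

lemma eq_image_vars_of_eval_eq_false {ψ : Clause n} {v : Fin n → Bool} (h : ψ.eval v = false) :
    ψ.1 = ψ.vars.image fun i => (i, !v i) := by
  rw [eval_eq_false_iff] at h
  ext ⟨i, b⟩
  simp only [vars, mem_image, Prod.mk.injEq, exists_exists_and_eq_and]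
  constructor
  · intro hb
    exact ⟨(i, b), hb, rfl, by rw [h _ hb, Bool.not_not]⟩
  · rintro ⟨l, hl, rfl, rfl⟩
    rwa [h l hl, Bool.not_not]

end Clause

open Clause

lemma card_filter_eval_eq_false_le_choose {n : ℕ} (φ : Finset (Clause n)) (v : Fin n → Bool) :
    #{ψ ∈ φ | ψ.eval v = false} ≤ n.choose 3 := by
  have h := card_le_card_of_injOn (s := {ψ ∈ φ | ψ.eval v = false})
    (t := powersetCard 3 (univ : Finset (Fin n))) Clause.vars
    (fun ψ _ => mem_powersetCard.2 ⟨subset_univ _, ψ.card_vars⟩)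
    (fun ψ hψ ψ' hψ' heq => Subtype.ext <| by
      rw [eq_image_vars_of_eval_eq_false (mem_filter.1 hψ).2,
        eq_image_vars_of_eval_eq_false (mem_filter.1 hψ').2, heq])
  rwa [card_powersetCard, card_univ, Fintype.card_fin] at h

lemma sum_card_filter_eval_eq_false {n : ℕ} (φ : Finset (Clause n)) :
    ∑ v : Fin n → Bool, #{ψ ∈ φ | ψ.eval v = false} = #φ * 2 ^ (n - 3) := by
  calc ∑ v : Fin n → Bool, #{ψ ∈ φ | ψ.eval v = false} = ∑ ψ ∈ φ, #(falsSet ψ) :=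
        (sum_card_bipartiteAbove_eq_sum_card_bipartiteBelow _).symm
    _ = #φ * 2 ^ (n - 3) := by simp only [card_falsSet, sum_const, smul_eq_mul]

lemma filter_eval_eq_false_eq_singleton {n : ℕ} {φ : Finset (Clause n)} (hunsat : Unsat φ)
    {ψ : Clause n} (hψ : ψ ∈ φ) {v : Fin n → Bool}
    (hv : ∀ ψ' ∈ φ.erase ψ, ψ'.eval v = true) :
    {ψ' ∈ φ | ψ'.eval v = false} = {ψ} := by
  have hψv : ψ.eval v = false := by
    by_contra h
    refine hunsat ⟨v, fun ψ' hψ' => ?_⟩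
    by_cases he : ψ' = ψ
    · simpa [he] using h
    · exact hv ψ' (mem_erase.2 ⟨he, hψ'⟩)
  ext ψ'
  simp only [mem_filter, mem_singleton]
  refine ⟨fun ⟨hψ', hf⟩ => ?_, fun h => h ▸ ⟨hψ, hψv⟩⟩
  by_contra he
  simpa [hf] using hv ψ' (mem_erase.2 ⟨he, hψ'⟩)

lemma sum_add_card_mul_le {α : Type*} [Fintype α] [DecidableEq α] {f : α → ℕ} {P : Finset α}
    {C : ℕ} (hP : ∀ v ∈ P, f v ≤ 1) (hC : ∀ v, f v ≤ C) :
    ∑ v, f v + #P * C ≤ #P + Fintype.card α * C := by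
  rw [← sum_sdiff (subset_univ P), ← card_univ, ← card_sdiff_add_card_eq_card (subset_univ P)]
  have h1 : ∑ v ∈ P, f v ≤ #P := card_eq_sum_ones P ▸ sum_le_sum hP
  have h2 : ∑ v ∈ univ \ P, f v ≤ #(univ \ P) * C := by
    simpa using sum_le_sum fun v (_ : v ∈ univ \ P) => hC v
  linarith [add_mul #(univ \ P) #P C]

theorem stmt_9 (n : ℕ) (hn : 3 ≤ n) (φ : Finset (Clause n)) (hunsat : Unsat φ)
    (hins : ∀ ψ ∈ φ, ∃ v : Fin n → Bool, ∀ ψ' ∈ φ.erase ψ, Clause.eval ψ' v = true) :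
    (φ.card : ℝ) ≤ (n.choose 3 * 2 ^ n) / (2 ^ (n - 3) + n.choose 3 - 1) := by
  choose! pivot hpivot using hins
  have hsingle : ∀ ψ ∈ φ, {ψ' ∈ φ | ψ'.eval (pivot ψ) = false} = {ψ} :=
    fun ψ hψ => filter_eval_eq_false_eq_singleton hunsat hψ (hpivot ψ hψ)
  have hinj : Set.InjOn pivot φ := fun ψ hψ ψ' hψ' h =>
    singleton_injective <| by rw [← hsingle ψ hψ, ← hsingle ψ' hψ', h]
  have hcount := sum_add_card_mul_le (P := φ.image pivot)
    (f := fun v => #{ψ ∈ φ | ψ.eval v = false})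
    (forall_mem_image.2 fun ψ hψ => by rw [hsingle ψ hψ, card_singleton])
    (card_filter_eval_eq_false_le_choose φ)
  rw [sum_card_filter_eval_eq_false, card_image_of_injOn hinj, Fintype.card_fun,
    Fintype.card_bool, Fintype.card_fin] at hcount
  have hC : (1 : ℝ) ≤ n.choose 3 := by exact_mod_cast Nat.choose_pos hn
  have hE : (1 : ℝ) ≤ 2 ^ (n - 3) := one_le_pow₀ one_le_two
  rw [le_div_iff₀ (by linarith)]
  have hcountℝ : (#φ * 2 ^ (n - 3) + #φ * n.choose 3 : ℝ) ≤ #φ + 2 ^ n * n.choose 3 := by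
    exact_mod_cast hcount
  linarith
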